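/- arXiv:2203.10365 — 4 statements merged into one kernel-verified Lean document; each statement's English description precedes it below -/
import Mathlib

section
/- Submodularity of F (diminishing returns): let X ⊆ Y ⊆ V be subsets such that p̃_X(i) = ∑_{j ∈ X} q i j · p j > 0 for every i ∈ V, and let v ∈ V. Then F(X ∪ {v}) − F(X) ≥ F(Y ∪ {v}) − F(Y). -/
lemma F_submodular_aux (p a b dX dY : ℝ) (hp : 0 < p) (ha : 0 < a) (hab : a ≤ b)
    (hdY : 0 ≤ dY) (hd : dY ≤ dX) :
    p * Real.log ((b + dY) / p) - p * Real.log (b / p) ≤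
    p * Real.log ((a + dX) / p) - p * Real.log (a / p) := by
  have hb : 0 < b := ha.trans_le hab
  have hdX : 0 ≤ dX := hdY.trans hd
  rw [← mul_sub, ← mul_sub]
  apply mul_le_mul_of_nonneg_left _ hp.le
  rw [Real.log_div (by positivity) hp.ne', Real.log_div hb.ne' hp.ne',
      Real.log_div (by positivity) hp.ne', Real.log_div ha.ne' hp.ne']
  have h : Real.log (b + dY) - Real.log b ≤ Real.log (a + dX) - Real.log a := by
    rw [← Real.log_div (by positivity) hb.ne', ← Real.log_div (by positivity) ha.ne']
    apply Real.log_le_log (by positivity)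
    rw [add_div, add_div, div_self hb.ne', div_self ha.ne']
    have : dY / b ≤ dX / a := div_le_div₀ hdX hd ha hab
    linarith
  linarith

/-- Submodularity (diminishing returns) of the coarsened log-likelihood objective
`F S = ∑ i, p i * log ((∑ j in S, q i j * p j) / p i)`. -/
theorem F_submodular
    {V : Type*} [Fintype V] [Nonempty V] [DecidableEq V]
    (p : V → ℝ) (q : V → V → ℝ)
    (hp : ∀ i, 0 < p i) (hpsum : ∑ i, p i = 1)
    (hq : ∀ i j, 0 ≤ q i j)
    (X Y : Finset V) (hXY : X ⊆ Y)
    (hX : ∀ i, 0 < ∑ j ∈ X, q i j * p j)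
    (v : V) :
    (∑ i, p i * Real.log ((∑ j ∈ insert v Y, q i j * p j) / p i)) -
      (∑ i, p i * Real.log ((∑ j ∈ Y, q i j * p j) / p i)) ≤
    (∑ i, p i * Real.log ((∑ j ∈ insert v X, q i j * p j) / p i)) -
      (∑ i, p i * Real.log ((∑ j ∈ X, q i j * p j) / p i)) := by
  rw [← Finset.sum_sub_distrib, ← Finset.sum_sub_distrib]
  apply Finset.sum_le_sum
  intro i _
  have haX : 0 < ∑ j ∈ X, q i j * p j := hX i
  have hab : (∑ j ∈ X, q i j * p j) ≤ ∑ j ∈ Y, q i j * p j :=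
    Finset.sum_le_sum_of_subset_of_nonneg hXY
      (fun j _ _ => mul_nonneg (hq i j) (hp j).le)
  have hd : 0 ≤ q i v * p v := mul_nonneg (hq i v) (hp v).le
  by_cases hvX : v ∈ X
  · rw [Finset.insert_eq_self.2 hvX, Finset.insert_eq_self.2 (hXY hvX)]
    simpa using F_submodular_aux (p i) _ _ 0 0 (hp i) haX hab le_rfl le_rfl
  · by_cases hvY : v ∈ Y
    · rw [Finset.insert_eq_self.2 hvY, Finset.sum_insert hvX, add_comm]
      simpa using F_submodular_aux (p i) _ _ (q i v * p v) 0 (hp i) haX hab le_rfl hd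
    · rw [Finset.sum_insert hvX, Finset.sum_insert hvY, add_comm (q i v * p v),
        add_comm (q i v * p v)]
      exact F_submodular_aux (p i) _ _ (q i v * p v) (q i v * p v) (hp i) haX hab hd le_rfl
end

section
/- Monotonicity of F: let X ⊆ Y ⊆ V be subsets such that p̃_X(i) = ∑_{j ∈ X} q i j · p j > 0 for every i ∈ V. Then F(X) ≤ F(Y). -/
/-- Monotonicity of the coarsened log-likelihood objective
`F S = ∑ i, p i * log ((∑ j in S, q i j * p j) / p i)`. -/
theorem F_monotone
    {V : Type*} [Fintype V] [Nonempty V]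
    (p : V → ℝ) (q : V → V → ℝ)
    (hp : ∀ i, 0 < p i) (hpsum : ∑ i, p i = 1)
    (hq : ∀ i j, 0 ≤ q i j)
    (X Y : Finset V) (hXY : X ⊆ Y)
    (hX : ∀ i, 0 < ∑ j ∈ X, q i j * p j) :
    (∑ i, p i * Real.log ((∑ j ∈ X, q i j * p j) / p i)) ≤
      (∑ i, p i * Real.log ((∑ j ∈ Y, q i j * p j) / p i)) := by
  apply Finset.sum_le_sum
  intro i _
  apply mul_le_mul_of_nonneg_left _ (hp i).le
  apply Real.log_le_log (div_pos (hX i) (hp i))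
  apply div_le_div_of_nonneg_right
    (Finset.sum_le_sum_of_subset_of_nonneg hXY
      (fun j _ _ => mul_nonneg (hq i j) (hp j).le)) (hp i).le
end

section
/- Supermodularity of the KL objective (diminishing reduction of KL divergence): let X ⊆ Y ⊆ V be subsets such that p̃_X(i) = ∑_{j ∈ X} q i j · p j > 0 for every i ∈ V, and let v ∈ V. Then the reduction in KL divergence obtained by adding v to X is at least that obtained by adding v to Y: φ(X) − φ(X ∪ {v}) ≥ φ(Y) − φ(Y ∪ {v}). -/
lemma log_diff_mono {x y a : ℝ} (hx : 0 < x) (hxy : x ≤ y) (ha : 0 ≤ a) :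
    Real.log (y + a) - Real.log y ≤ Real.log (x + a) - Real.log x := by
  have hy : 0 < y := lt_of_lt_of_le hx hxy
  rw [← Real.log_div (by positivity) (by positivity),
      ← Real.log_div (by positivity) (by positivity)]
  apply Real.log_le_log (by positivity)
  rw [div_le_div_iff₀ hy hx]
  nlinarith

/-- Supermodularity of the KL objective
`φ S = ∑ i, p i * log (p i / (∑ j in S, q i j * p j))`:
the reduction in KL divergence from adding `v` is diminishing. -/
theorem phi_supermodular
    {V : Type*} [Fintype V] [Nonempty V] [DecidableEq V]
    (p : V → ℝ) (q : V → V → ℝ)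
    (hp : ∀ i, 0 < p i) (hpsum : ∑ i, p i = 1)
    (hq : ∀ i j, 0 ≤ q i j)
    (X Y : Finset V) (hXY : X ⊆ Y)
    (hX : ∀ i, 0 < ∑ j ∈ X, q i j * p j)
    (v : V) :
    (∑ i, p i * Real.log (p i / (∑ j ∈ Y, q i j * p j))) -
      (∑ i, p i * Real.log (p i / (∑ j ∈ insert v Y, q i j * p j))) ≤
    (∑ i, p i * Real.log (p i / (∑ j ∈ X, q i j * p j))) -
      (∑ i, p i * Real.log (p i / (∑ j ∈ insert v X, q i j * p j))) := by
  rw [← Finset.sum_sub_distrib, ← Finset.sum_sub_distrib]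
  apply Finset.sum_le_sum
  intro i _
  have hnn : ∀ j, 0 ≤ q i j * p j := fun j => mul_nonneg (hq i j) (hp j).le
  have hsX : 0 < ∑ j ∈ X, q i j * p j := hX i
  have hsXY : (∑ j ∈ X, q i j * p j) ≤ ∑ j ∈ Y, q i j * p j :=
    Finset.sum_le_sum_of_subset_of_nonneg hXY (fun j _ _ => hnn j)
  have hsY : 0 < ∑ j ∈ Y, q i j * p j := lt_of_lt_of_le hsX hsXY
  have hsXv : 0 < ∑ j ∈ insert v X, q i j * p j :=
    lt_of_lt_of_le hsX (Finset.sum_le_sum_of_subset_of_nonneg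
      (Finset.subset_insert v X) (fun j _ _ => hnn j))
  have hsYv : 0 < ∑ j ∈ insert v Y, q i j * p j :=
    lt_of_lt_of_le hsY (Finset.sum_le_sum_of_subset_of_nonneg
      (Finset.subset_insert v Y) (fun j _ _ => hnn j))
  have h2 : Real.log (∑ j ∈ insert v Y, q i j * p j) - Real.log (∑ j ∈ Y, q i j * p j) ≤
      Real.log (∑ j ∈ insert v X, q i j * p j) - Real.log (∑ j ∈ X, q i j * p j) := by
    by_cases hvX : v ∈ X
    · rw [Finset.insert_eq_self.2 hvX, Finset.insert_eq_self.2 (hXY hvX)]; simp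
    · by_cases hvY : v ∈ Y
      · rw [Finset.insert_eq_self.2 hvY, Finset.sum_insert hvX]
        have : Real.log (∑ j ∈ X, q i j * p j) ≤
            Real.log (q i v * p v + ∑ j ∈ X, q i j * p j) :=
          Real.log_le_log hsX (by nlinarith [hnn v])
        linarith
      · rw [Finset.sum_insert hvX, Finset.sum_insert hvY, add_comm (q i v * p v),
            add_comm (q i v * p v)]
        exact log_diff_mono hsX hsXY (hnn v)
  have h3 := mul_le_mul_of_nonneg_left h2 (hp i).le
  rw [Real.log_div (hp i).ne' hsY.ne', Real.log_div (hp i).ne' hsYv.ne',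
      Real.log_div (hp i).ne' hsX.ne', Real.log_div (hp i).ne' hsXv.ne']
  nlinarith [h3]
end

section
/- Greedy (1 − 1/e)-approximation for cardinality-constrained maximization of a monotone submodular function: let V be a nonempty finite type and F : Finset V → ℝ satisfy (i) F(∅) = 0; (ii) monotonicity: F(X) ≤ F(Y) whenever X ⊆ Y; (iii) submodularity: F(X ∪ {v}) − F(X) ≥ F(Y ∪ {v}) − F(Y) for all X ⊆ Y ⊆ V and v ∈ V. Let k ≥ 1 and let S₀ = ∅, S_{m+1} = S_m ∪ {g_m} (for m < k) be a greedy sequence, where each g_m ∈ V satisfies F(S_m ∪ {g_m}) ≥ F(S_m ∪ {t}) for all t ∈ V. Then for every subset T ⊆ V with |T| ≤ k, F(S_k) ≥ (1 − (1 − 1/k)^k) · F(T); in particular F(S_k) ≥ (1 − 1/e) · F(T). -/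
/-- Greedy `(1 - 1/e)`-approximation for cardinality-constrained maximization
of a monotone submodular set function `F` with `F ∅ = 0`. -/
theorem greedy_submodular_approx
    {V : Type*} [Fintype V] [Nonempty V] [DecidableEq V]
    (F : Finset V → ℝ)
    (hF0 : F ∅ = 0)
    (hmono : ∀ X Y : Finset V, X ⊆ Y → F X ≤ F Y)
    (hsub : ∀ X Y : Finset V, X ⊆ Y → ∀ v : V,
      F (insert v Y) - F Y ≤ F (insert v X) - F X)
    (k : ℕ) (hk : 1 ≤ k)
    (S : ℕ → Finset V) (g : ℕ → V)
    (hS0 : S 0 = ∅)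
    (hSstep : ∀ m < k, S (m + 1) = insert (g m) (S m))
    (hgreedy : ∀ m < k, ∀ t : V, F (insert t (S m)) ≤ F (insert (g m) (S m)))
    (T : Finset V) (hT : T.card ≤ k) :
    (1 - (1 - 1 / (k : ℝ)) ^ k) * F T ≤ F (S k) ∧
      (1 - 1 / Real.exp 1) * F T ≤ F (S k) := by
  have hk0 : (0:ℝ) < (k:ℝ) := by exact_mod_cast hk
  have hc : (0:ℝ) ≤ 1 - 1/(k:ℝ) := by
    rw [sub_nonneg, div_le_one hk0]
    exact_mod_cast hk
  have hFT0 : 0 ≤ F T := hF0 ▸ hmono ∅ T (Finset.empty_subset T)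
  -- submodular sum bound
  have lemA : ∀ (B A : Finset V),
      F (A ∪ B) ≤ F A + ∑ t ∈ B, (F (insert t A) - F A) := by
    intro B
    induction B using Finset.induction_on with
    | empty => intro A; simp
    | insert a s hb ih =>
      intro A
      rw [Finset.union_insert, Finset.sum_insert hb]
      have h1 := hsub A (A ∪ s) Finset.subset_union_left a
      have h2 := ih A
      linarith
  -- main induction
  have key : ∀ m, m ≤ k → F T - F (S m) ≤ (1 - 1/(k:ℝ))^m * F T := by
    intro m
    induction m with
    | zero => intro _; simp [hS0, hF0]
    | succ m ih =>
      intro hm1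
      have hm : m < k := hm1
      have ihm := ih (le_of_lt hm)
      set δ := F (S (m+1)) - F (S m) with hδ
      have hstep := hSstep m hm
      have hδ0 : 0 ≤ δ := by
        have := hmono (S m) (S (m+1)) (by rw [hstep]; exact Finset.subset_insert _ _)
        linarith
      have heach : ∀ t ∈ T, F (insert t (S m)) - F (S m) ≤ δ := by
        intro t _
        have := hgreedy m hm t
        rw [hδ, hstep]
        linarith
      have hsum : ∑ t ∈ T, (F (insert t (S m)) - F (S m)) ≤ (T.card : ℝ) * δ := by
        calc ∑ t ∈ T, (F (insert t (S m)) - F (S m)) ≤ ∑ _t ∈ T, δ :=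
              Finset.sum_le_sum heach
          _ = (T.card : ℝ) * δ := by rw [Finset.sum_const, nsmul_eq_mul]
      have hX : F T - F (S m) ≤ (k:ℝ) * δ := by
        have h1 : F T ≤ F (S m ∪ T) :=
          hmono T (S m ∪ T) Finset.subset_union_right
        have h2 := lemA T (S m)
        have h3 : (T.card : ℝ) * δ ≤ (k:ℝ) * δ := by
          apply mul_le_mul_of_nonneg_right _ hδ0
          exact_mod_cast hT
        linarith
      have hinv : (0:ℝ) ≤ 1/(k:ℝ) := by positivity
      have h4 := mul_le_mul_of_nonneg_left hX hinv
      have h5 : (1/(k:ℝ)) * ((k:ℝ) * δ) = δ := by field_simp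
      rw [h5] at h4
      have hcontr : F T - F (S (m+1)) ≤ (1 - 1/(k:ℝ)) * (F T - F (S m)) := by
        have hexp : (1 - 1/(k:ℝ)) * (F T - F (S m))
            = (F T - F (S m)) - (1/(k:ℝ)) * (F T - F (S m)) := by ring
        rw [hexp]
        linarith
      calc F T - F (S (m+1)) ≤ (1 - 1/(k:ℝ)) * (F T - F (S m)) := hcontr
        _ ≤ (1 - 1/(k:ℝ)) * ((1 - 1/(k:ℝ))^m * F T) :=
            mul_le_mul_of_nonneg_left ihm hc
        _ = (1 - 1/(k:ℝ))^(m+1) * F T := by ring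
  have hkey := key k le_rfl
  have hfirst : (1 - (1 - 1 / (k : ℝ)) ^ k) * F T ≤ F (S k) := by
    have hexp : (1 - (1 - 1/(k:ℝ))^k) * F T
        = F T - (1 - 1/(k:ℝ))^k * F T := by ring
    rw [hexp]; linarith
  refine ⟨hfirst, ?_⟩
  -- (1 - 1/k)^k ≤ 1/e
  have h1 : 1 - 1/(k:ℝ) ≤ Real.exp (-(1/(k:ℝ))) := by
    have := Real.add_one_le_exp (-(1/(k:ℝ)))
    linarith
  have h2 : (1 - 1/(k:ℝ))^k ≤ Real.exp (-(1/(k:ℝ)))^k :=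
    pow_le_pow_left₀ hc h1 k
  have h3 : Real.exp (-(1/(k:ℝ)))^k = Real.exp ((k:ℝ) * (-(1/(k:ℝ)))) :=
    (Real.exp_nat_mul _ k).symm
  have h4 : (k:ℝ) * (-(1/(k:ℝ))) = -1 := by field_simp
  have h5 : (1 - 1/(k:ℝ))^k ≤ 1 / Real.exp 1 := by
    rw [h3, h4, Real.exp_neg] at h2
    exact h2.trans_eq (one_div _).symm
  have h6 : (1 - 1/Real.exp 1) * F T ≤ (1 - (1 - 1/(k:ℝ))^k) * F T :=
    mul_le_mul_of_nonneg_right (by linarith) hFT0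
  linarith
end
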